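/- arXiv:1201.2998 — 5 statements merged into one kernel-verified Lean document; each statement's English description precedes it below -/
import Mathlib

section
/- For any complex numbers a, b, c with x = 1 + |a|² + |b|² + |c|², the 6×6 real matrix I with entries I₁₄ = (x - 2|b|² - 2|c|²)/x, I₂₅ = (x - 2|a|² - 2|c|²)/x, I₃₆ = (x - 2|a|² - 2|b|²)/x, I₁₂ = 2Im(ā·b + c)/x, I₁₃ = 2Im(ā·c - b)/x, I₂₃ = 2Im(b̄·c + a)/x, I₁₅ = 2Re(ā·b - c)/x, I₁₆ = 2Re(ā·c + b)/x, I₂₄ = 2Re(ā·b + c)/x, I₂₆ = 2Re(b̄·c - a)/x, I₃₄ = 2Re(ā·c - b)/x, I₃₅ = 2Re(b̄·c + a)/x, I₄₅ = 2Im(ā·b - c)/x, I₄₆ = 2Im(ā·c + b)/x, I₅₆ = 2Im(b̄·c - a)/x, with I skew-symmetric (I_{ji} = -I_{ij}) and zero diagonal, satisfies I² = -Id. -/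
open Matrix Complex

/-- The matrix of formula (4) in the paper: the orthogonal almost complex structure on `ℝ⁶`
corresponding to the point `[1, a, b, c] ∈ ℂP³`. -/
noncomputable def paperI (a b c : ℂ) : Matrix (Fin 6) (Fin 6) ℝ :=
  let x : ℝ := 1 + normSq a + normSq b + normSq c
  x⁻¹ • !![0, 2 * (star a * b + c).im, 2 * (star a * c - b).im, x - 2 * normSq b - 2 * normSq c, 2 * (star a * b - c).re, 2 * (star a * c + b).re;
    -(2 * (star a * b + c).im), 0, 2 * (star b * c + a).im, 2 * (star a * b + c).re, x - 2 * normSq a - 2 * normSq c, 2 * (star b * c - a).re;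
    -(2 * (star a * c - b).im), -(2 * (star b * c + a).im), 0, 2 * (star a * c - b).re, 2 * (star b * c + a).re, x - 2 * normSq a - 2 * normSq b;
    2 * normSq b + 2 * normSq c - x, -(2 * (star a * b + c).re), -(2 * (star a * c - b).re), 0, 2 * (star a * b - c).im, 2 * (star a * c + b).im;
    -(2 * (star a * b - c).re), 2 * normSq a + 2 * normSq c - x, -(2 * (star b * c + a).re), -(2 * (star a * b - c).im), 0, 2 * (star b * c - a).im;
    -(2 * (star a * c + b).re), -(2 * (star b * c - a).re), 2 * normSq a + 2 * normSq b - x, -(2 * (star a * c + b).im), -(2 * (star b * c - a).im), 0]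

lemma my_cons_val_five {α : Type*} {m : ℕ} (x : α) (u : Fin m.succ.succ.succ.succ.succ → α) :
    Matrix.vecCons x u 5 = Matrix.vecHead (Matrix.vecTail (Matrix.vecTail (Matrix.vecTail (Matrix.vecTail u)))) :=
  rfl

def M6 (a1 a2 b1 b2 c1 c2 : ℝ) : Matrix (Fin 6) (Fin 6) ℝ :=
  !![0, 2*(a1*b2 - a2*b1 + c2), 2*(a1*c2 - a2*c1 - b2), (1 + (a1^2 + a2^2) + (b1^2 + b2^2) + (c1^2 + c2^2)) - 2*(b1^2+b2^2) - 2*(c1^2+c2^2), 2*(a1*b1 + a2*b2 - c1), 2*(a1*c1 + a2*c2 + b1);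
    -(2*(a1*b2 - a2*b1 + c2)), 0, 2*(b1*c2 - b2*c1 + a2), 2*(a1*b1 + a2*b2 + c1), (1 + (a1^2 + a2^2) + (b1^2 + b2^2) + (c1^2 + c2^2)) - 2*(a1^2+a2^2) - 2*(c1^2+c2^2), 2*(b1*c1 + b2*c2 - a1);
    -(2*(a1*c2 - a2*c1 - b2)), -(2*(b1*c2 - b2*c1 + a2)), 0, 2*(a1*c1 + a2*c2 - b1), 2*(b1*c1 + b2*c2 + a1), (1 + (a1^2 + a2^2) + (b1^2 + b2^2) + (c1^2 + c2^2)) - 2*(a1^2+a2^2) - 2*(b1^2+b2^2);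
    2*(b1^2+b2^2) + 2*(c1^2+c2^2) - (1 + (a1^2 + a2^2) + (b1^2 + b2^2) + (c1^2 + c2^2)), -(2*(a1*b1 + a2*b2 + c1)), -(2*(a1*c1 + a2*c2 - b1)), 0, 2*(a1*b2 - a2*b1 - c2), 2*(a1*c2 - a2*c1 + b2);
    -(2*(a1*b1 + a2*b2 - c1)), 2*(a1^2+a2^2) + 2*(c1^2+c2^2) - (1 + (a1^2 + a2^2) + (b1^2 + b2^2) + (c1^2 + c2^2)), -(2*(b1*c1 + b2*c2 + a1)), -(2*(a1*b2 - a2*b1 - c2)), 0, 2*(b1*c2 - b2*c1 - a2);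
    -(2*(a1*c1 + a2*c2 + b1)), -(2*(b1*c1 + b2*c2 - a1)), 2*(a1^2+a2^2) + 2*(b1^2+b2^2) - (1 + (a1^2 + a2^2) + (b1^2 + b2^2) + (c1^2 + c2^2)), -(2*(a1*c2 - a2*c1 + b2)), -(2*(b1*c2 - b2*c1 - a2)), 0]

set_option maxHeartbeats 2000000 in
lemma M6_sq (a1 a2 b1 b2 c1 c2 : ℝ) :
    M6 a1 a2 b1 b2 c1 c2 * M6 a1 a2 b1 b2 c1 c2 =
      (-( (1 + (a1^2 + a2^2) + (b1^2 + b2^2) + (c1^2 + c2^2))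
        * (1 + (a1^2 + a2^2) + (b1^2 + b2^2) + (c1^2 + c2^2)))) • 1 := by
  ext i j
  fin_cases i <;> fin_cases j <;>
    simp [M6, Matrix.mul_apply, Fin.sum_univ_six, Matrix.one_apply, Fin.ext_iff,
      Matrix.cons_val_zero, Matrix.cons_val_one, Matrix.cons_val_two, Matrix.cons_val_three,
      Matrix.cons_val_four, my_cons_val_five, Matrix.head_cons, Matrix.tail_cons,
      Matrix.vecHead, Matrix.vecTail] <;>
    ring_nf <;> norm_num [Fin.ext_iff] <;> exact (if_neg (by decide)).symm

set_option maxHeartbeats 2000000 in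
/-- The matrix of formula (4) squares to `-Id`: it is an almost complex structure. -/
theorem paperI_sq_neg_one (a b c : ℂ) :
    paperI a b c * paperI a b c = -1 := by
  have hM : paperI a b c =
      (1 + (a.re^2 + a.im^2) + (b.re^2 + b.im^2) + (c.re^2 + c.im^2))⁻¹ •
        M6 a.re a.im b.re b.im c.re c.im := by
    ext i j
    fin_cases i <;> fin_cases j <;>
      simp [paperI, M6, Complex.normSq_apply, Complex.mul_re, Complex.mul_im,
        Complex.add_re, Complex.add_im, Complex.sub_re, Complex.sub_im,
        Complex.conj_re, Complex.conj_im,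
        Matrix.cons_val_zero, Matrix.cons_val_one, Matrix.cons_val_two, Matrix.cons_val_three,
        Matrix.cons_val_four, my_cons_val_five, Matrix.head_cons, Matrix.tail_cons,
        Matrix.vecHead, Matrix.vecTail] <;>
      ring_nf <;> tauto
  have hx : (1 + (a.re^2 + a.im^2) + (b.re^2 + b.im^2) + (c.re^2 + c.im^2) : ℝ) ≠ 0 := by
    positivity
  rw [hM, Matrix.smul_mul, Matrix.mul_smul, M6_sq, smul_smul, smul_smul]
  have h1 : (1 + (a.re^2 + a.im^2) + (b.re^2 + b.im^2) + (c.re^2 + c.im^2) : ℝ)⁻¹ *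
      (1 + (a.re^2 + a.im^2) + (b.re^2 + b.im^2) + (c.re^2 + c.im^2))⁻¹ *
        -((1 + (a.re^2 + a.im^2) + (b.re^2 + b.im^2) + (c.re^2 + c.im^2)) *
          (1 + (a.re^2 + a.im^2) + (b.re^2 + b.im^2) + (c.re^2 + c.im^2))) = -1 := by
    field_simp
  rw [h1, neg_smul, one_smul]
end

section
/- The matrix I from the previous construction (Theorem 1, formula (4)) is orthogonal: Iᵀ I = Id. -/
open Matrix Complex

/-- Auxiliary: the unscaled matrix of formula (4). -/
noncomputable def paperI_M (a b c : ℂ) : Matrix (Fin 6) (Fin 6) ℝ :=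
  let x : ℝ := 1 + normSq a + normSq b + normSq c
  !![0, 2 * (star a * b + c).im, 2 * (star a * c - b).im, x - 2 * normSq b - 2 * normSq c, 2 * (star a * b - c).re, 2 * (star a * c + b).re;
    -(2 * (star a * b + c).im), 0, 2 * (star b * c + a).im, 2 * (star a * b + c).re, x - 2 * normSq a - 2 * normSq c, 2 * (star b * c - a).re;
    -(2 * (star a * c - b).im), -(2 * (star b * c + a).im), 0, 2 * (star a * c - b).re, 2 * (star b * c + a).re, x - 2 * normSq a - 2 * normSq b;
    2 * normSq b + 2 * normSq c - x, -(2 * (star a * b + c).re), -(2 * (star a * c - b).re), 0, 2 * (star a * b - c).im, 2 * (star a * c + b).im;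
    -(2 * (star a * b - c).re), 2 * normSq a + 2 * normSq c - x, -(2 * (star b * c + a).re), -(2 * (star a * b - c).im), 0, 2 * (star b * c - a).im;
    -(2 * (star a * c + b).re), -(2 * (star b * c - a).re), 2 * normSq a + 2 * normSq b - x, -(2 * (star a * c + b).im), -(2 * (star b * c - a).im), 0]

lemma cons_val_five {α} {m : ℕ} (x : α) (u : Fin (m+5) → α) :
    Matrix.vecCons x u 5 = u 4 := rfl

set_option maxHeartbeats 4000000 in
lemma paperI_M_mul (a b c : ℂ) :
    (paperI_M a b c)ᵀ * paperI_M a b c =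
      ((1 + normSq a + normSq b + normSq c) * (1 + normSq a + normSq b + normSq c)) •
        (1 : Matrix (Fin 6) (Fin 6) ℝ) := by
  obtain ⟨a1, a2⟩ := a
  obtain ⟨b1, b2⟩ := b
  obtain ⟨c1, c2⟩ := c
  ext i j
  fin_cases i <;> fin_cases j <;>
  · simp only [paperI_M, Matrix.transpose_apply, Matrix.mul_apply, Fin.sum_univ_six,
      Matrix.smul_apply, Matrix.one_apply, Matrix.cons_val', Matrix.cons_val_zero,
      Matrix.cons_val_one, Matrix.head_cons, Matrix.cons_val_two, Matrix.cons_val_three,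
      Matrix.cons_val_four, cons_val_five, Matrix.tail_cons, Fin.ext_iff,
      Matrix.head_fin_const, Matrix.empty_val',
      Matrix.cons_val_fin_one, Matrix.of_apply, Complex.normSq_mk, Complex.star_def,
      Complex.conj_re, Complex.conj_im, Complex.mul_re, Complex.mul_im, Complex.add_re,
      Complex.add_im, Complex.sub_re, Complex.sub_im, Fin.isValue, smul_eq_mul]
    norm_num
    ring_nf

/-- The matrix of formula (4) is orthogonal: `Iᵀ I = Id`. -/
theorem paperI_orthogonal (a b c : ℂ) :
    (paperI a b c)ᵀ * paperI a b c = 1 := by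
  have h0 := normSq_nonneg a
  have h1 := normSq_nonneg b
  have h2 := normSq_nonneg c
  have hx : (1 + normSq a + normSq b + normSq c) ≠ 0 := by nlinarith
  have hI : paperI a b c = (1 + normSq a + normSq b + normSq c)⁻¹ • paperI_M a b c := rfl
  rw [hI, Matrix.transpose_smul, Matrix.smul_mul, Matrix.mul_smul, paperI_M_mul, smul_smul,
    smul_smul, show (1 + normSq a + normSq b + normSq c)⁻¹ *
      (1 + normSq a + normSq b + normSq c)⁻¹ *
        ((1 + normSq a + normSq b + normSq c) * (1 + normSq a + normSq b + normSq c)) = 1 by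
      field_simp, one_smul]
end

section
/- For the matrix I of formula (4) with parameters a, b, c ∈ ℂ, the trace-like quantity 1 + I₁₄ + I₂₅ + I₃₆ equals 4/x where x = 1 + |a|² + |b|² + |c|², and in particular is nonzero; moreover the coordinate recovery formulas hold: a = ((I₃₅ - I₂₆) + i(I₂₃ - I₅₆))/(1 + I₁₄ + I₂₅ + I₃₆), b = ((I₁₆ - I₃₄) + i(I₄₆ - I₁₃))/(1 + I₁₄ + I₂₅ + I₃₆), c = ((I₂₄ - I₁₅) + i(I₁₂ - I₄₅))/(1 + I₁₄ + I₂₅ + I₃₆). -/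
open Matrix Complex

/-- For the matrix `I` of formula (4), `1 + I₁₄ + I₂₅ + I₃₆ = 4/x ≠ 0` where
`x = 1 + |a|² + |b|² + |c|²`, and the homogeneous coordinates `a, b, c` are recovered
from the entries of `I` by formulas (5). -/
theorem paperI_coordinate_recovery (a b c : ℂ) :
    let I := paperI a b c
    let x : ℝ := 1 + normSq a + normSq b + normSq c
    let t : ℝ := 1 + I 0 3 + I 1 4 + I 2 5
    t = 4 / x ∧ t ≠ 0 ∧
      a = (((I 2 4 - I 1 5 : ℝ) : ℂ) + ((I 1 2 - I 4 5 : ℝ) : ℂ) * Complex.I) / (t : ℂ) ∧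
      b = (((I 0 5 - I 2 3 : ℝ) : ℂ) + ((I 3 5 - I 0 2 : ℝ) : ℂ) * Complex.I) / (t : ℂ) ∧
      c = (((I 1 3 - I 0 4 : ℝ) : ℂ) + ((I 0 1 - I 3 4 : ℝ) : ℂ) * Complex.I) / (t : ℂ) := by
  intro I x t
  have hI : I = paperI a b c := rfl
  have hx : x = 1 + normSq a + normSq b + normSq c := rfl
  have htd : t = 1 + I 0 3 + I 1 4 + I 2 5 := rfl
  have h5 : (5 : Fin 6) = (4 : Fin 5).succ := rfl
  have hx0 : (0:ℝ) < 1 + normSq a + normSq b + normSq c := by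
    have := normSq_nonneg a; have := normSq_nonneg b; have := normSq_nonneg c; linarith
  have ht : t = 4 / x := by
    rw [htd, hI, hx]
    simp only [paperI]
    simp [h5, Matrix.cons_val_succ, Matrix.cons_val_four]
    field_simp
    ring
  have ht0 : t ≠ 0 := by
    rw [ht, hx]; exact div_ne_zero (by norm_num) hx0.ne'
  have htC : (t:ℝ) ≠ 0 := ht0
  have htC' : ((t:ℝ):ℂ) ≠ 0 := Complex.ofReal_ne_zero.mpr ht0
  refine ⟨ht, ht0, ?_, ?_, ?_⟩ <;>
  · rw [eq_div_iff htC', Complex.ext_iff]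
    simp only [Complex.add_re, Complex.add_im, Complex.mul_re, Complex.mul_im,
      Complex.ofReal_re, Complex.ofReal_im, Complex.I_re, Complex.I_im]
    rw [ht, hI, hx]
    simp only [paperI]
    constructor <;>
    · simp [h5, Matrix.cons_val_succ, Matrix.cons_val_four, Complex.normSq_apply,
        Complex.mul_re, Complex.mul_im]
      field_simp
      ring
end

section
/- Let I and I₀ be linear endomorphisms of a finite-dimensional real vector space with I² = I₀² = -Id, and suppose Id - I·I₀ is invertible, with K = (Id - I·I₀)⁻¹(Id + I·I₀). Then Id - K is invertible and I = (Id - K) I₀ (Id - K)⁻¹. -/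
/-- For `K = (Id - I∘I₀)⁻¹ ∘ (Id + I∘I₀)`, the operator `Id - K` is invertible and
`I = (Id - K) I₀ (Id - K)⁻¹`. -/
theorem cayley_reconstruction
    {V : Type*} [AddCommGroup V] [Module ℝ V] [FiniteDimensional ℝ V]
    (I I₀ : Module.End ℝ V)
    (hI : I * I = -1) (hI₀ : I₀ * I₀ = -1)
    (hinv : IsUnit (1 - I * I₀)) :
    let K : Module.End ℝ V := Ring.inverse (1 - I * I₀) * (1 + I * I₀)
    IsUnit (1 - K) ∧ I = (1 - K) * I₀ * Ring.inverse (1 - K) := by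
  intro K
  set A : Module.End ℝ V := 1 - I * I₀ with hA
  set Ai : Module.End ℝ V := Ring.inverse A with hAi
  have hAr : A * Ai = 1 := Ring.mul_inverse_cancel A hinv
  have hAl : Ai * A = 1 := Ring.inverse_mul_cancel A hinv
  have hKdef : K = Ai * (1 + I * I₀) := rfl
  -- 1 - K = (-2) • (Ai * (I * I₀))
  have h1 : 1 - K = ((-2 : ℝ)) • (Ai * (I * I₀)) := by
    have : (1 : Module.End ℝ V) - K = Ai * A - Ai * (1 + I * I₀) := by
      rw [hAl, hKdef]
    rw [this, hA]
    rw [show Ai * (1 - I * I₀) - Ai * (1 + I * I₀) = Ai * ((1 - I * I₀) - (1 + I * I₀)) by noncomm_ring]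
    rw [show (1 : Module.End ℝ V) - I * I₀ - (1 + I * I₀) = ((-2 : ℝ)) • (I * I₀) by
      rw [neg_smul, two_smul]; abel]
    rw [mul_smul_comm]
  set M : Module.End ℝ V := ((-(1:ℝ)/2)) • (I₀ * I * A) with hM
  have h2 : (1 - K) * M = 1 := by
    rw [h1, hM, smul_mul_assoc, mul_smul_comm, smul_smul]
    norm_num
    have e1 : Ai * (I * I₀) * (I₀ * I * A) = Ai * (I * (I₀ * I₀) * I * A) := by noncomm_ring
    rw [e1, hI₀]
    have e2 : Ai * (I * (-1) * I * A) = Ai * (-(I*I) * A) := by noncomm_ring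
    rw [e2, hI]
    simp [hAl]
  have h3 : M * (1 - K) = 1 := by
    rw [h1, hM, smul_mul_assoc, mul_smul_comm, smul_smul]
    norm_num
    have e1 : I₀ * I * A * (Ai * (I * I₀)) = I₀ * I * (A * Ai) * (I * I₀) := by noncomm_ring
    rw [e1, hAr]
    have e2 : I₀ * I * 1 * (I * I₀) = I₀ * (I * I) * I₀ := by noncomm_ring
    rw [e2, hI]
    have e3 : I₀ * (-1) * I₀ = -(I₀ * I₀) := by noncomm_ring
    rw [e3, hI₀]; simp
  have hU : IsUnit (1 - K) := ⟨⟨1 - K, M, h2, h3⟩, rfl⟩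
  refine ⟨hU, ?_⟩
  have hMinv : Ring.inverse (1 - K) = M := by
    have h := Ring.inverse_mul_cancel (1 - K) hU
    calc Ring.inverse (1 - K) = Ring.inverse (1 - K) * ((1 - K) * M) := by rw [h2, mul_one]
      _ = (Ring.inverse (1 - K) * (1 - K)) * M := by rw [mul_assoc]
      _ = M := by rw [h, one_mul]
  rw [hMinv, h1, hM]
  -- goal: I = (-2)•(Ai*(I*I₀)) * I₀ * ((-1/2)•(I₀*I*A))
  rw [smul_mul_assoc, smul_mul_assoc, mul_smul_comm, smul_smul]
  norm_num
  -- goal: I = Ai*(I*I₀)*I₀*(I₀*I*A)   (up to smul 1)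
  have e1 : Ai * (I * I₀) * I₀ * (I₀ * I * A) = Ai * (I * (I₀ * I₀) * I₀ * I * A) := by noncomm_ring
  rw [e1, hI₀]
  have e2 : Ai * (I * (-1) * I₀ * I * A) = Ai * (-(I * I₀ * I) * A) := by noncomm_ring
  rw [e2]
  have key : -(I * I₀ * I) * A = A * I := by
    rw [hA]
    have : -(I * I₀ * I) * (1 - I * I₀) = -(I * I₀ * I) + I * I₀ * (I * I) * I₀ := by noncomm_ring
    rw [this, hI]
    have : -(I * I₀ * I) + I * I₀ * (-1) * I₀ = -(I * I₀ * I) - I * (I₀ * I₀) := by noncomm_ring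
    rw [this, hI₀]
    noncomm_ring
  rw [key, ← mul_assoc, hAl, one_mul]
end

section
/- If I and I₀ are orthogonal endomorphisms of a real inner product space with I² = I₀² = -Id and Id - I·I₀ invertible, then K = (Id - I·I₀)⁻¹(Id + I·I₀) is skew-adjoint: g(KX, Y) = -g(X, KY) for all X, Y. -/
open RealInnerProductSpace

/-- If `I` and `I₀` are orthogonal almost complex structures on a finite-dimensional real
inner product space and `Id - I∘I₀` is invertible, then
`K = (Id - I∘I₀)⁻¹ ∘ (Id + I∘I₀)` is skew-adjoint. -/
theorem cayley_skew_adjoint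
    {V : Type*} [NormedAddCommGroup V] [InnerProductSpace ℝ V] [FiniteDimensional ℝ V]
    (I I₀ : Module.End ℝ V)
    (hI : I * I = -1) (hI₀ : I₀ * I₀ = -1)
    (hIg : ∀ X Y : V, ⟪I X, I Y⟫ = ⟪X, Y⟫)
    (hI₀g : ∀ X Y : V, ⟪I₀ X, I₀ Y⟫ = ⟪X, Y⟫)
    (hinv : IsUnit (1 - I * I₀)) :
    let K : Module.End ℝ V := Ring.inverse (1 - I * I₀) * (1 + I * I₀)
    ∀ X Y : V, ⟪K X, Y⟫ = -⟪X, K Y⟫ := by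
  intro K
  set a : Module.End ℝ V := I * I₀ with ha
  set b : Module.End ℝ V := I₀ * I with hb
  -- adjoint of I is -I
  have hIa : (-I : Module.End ℝ V) = LinearMap.adjoint I := by
    rw [LinearMap.eq_adjoint_iff]
    intro x y
    have h1 := hIg x (I y)
    have h2 : I (I y) = -y := by
      have : (I * I) y = (-1 : Module.End ℝ V) y := by rw [hI]
      simpa [Module.End.mul_apply] using this
    rw [h2] at h1
    simp only [LinearMap.neg_apply, inner_neg_left, inner_neg_right] at *
    linarith [h1]
  have hI₀a : (-I₀ : Module.End ℝ V) = LinearMap.adjoint I₀ := by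
    rw [LinearMap.eq_adjoint_iff]
    intro x y
    have h1 := hI₀g x (I₀ y)
    have h2 : I₀ (I₀ y) = -y := by
      have : (I₀ * I₀) y = (-1 : Module.End ℝ V) y := by rw [hI₀]
      simpa [Module.End.mul_apply] using this
    rw [h2] at h1
    simp only [LinearMap.neg_apply, inner_neg_left, inner_neg_right] at *
    linarith [h1]
  -- star a = b
  have hstar_a : star a = b := by
    rw [ha, hb, star_mul, LinearMap.star_eq_adjoint, LinearMap.star_eq_adjoint,
      ← hIa, ← hI₀a, neg_mul_neg]
  have hab : a * b = 1 := by
    have h1 : a * b = I * (I₀ * I₀) * I := by rw [ha, hb]; noncomm_ring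
    rw [h1, hI₀]
    calc I * (-1) * I = -(I * I) := by noncomm_ring
      _ = 1 := by rw [hI]; simp
  have hba : b * a = 1 := by
    have h1 : b * a = I₀ * (I * I) * I₀ := by rw [ha, hb]; noncomm_ring
    rw [h1, hI]
    calc I₀ * (-1) * I₀ = -(I₀ * I₀) := by noncomm_ring
      _ = 1 := by rw [hI₀]; simp
  have hbu : IsUnit b := ⟨⟨b, a, hba, hab⟩, rfl⟩
  -- 1 - b = (-b) * (1 - a)
  have hfact : (1 : Module.End ℝ V) - b = (-b) * (1 - a) := by
    have : (-b) * (1 - a) = -b + b * a := by noncomm_ring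
    rw [this, hba]; abel
  have hbinv : IsUnit (1 - b) := by
    rw [hfact]; exact (hbu.neg).mul hinv
  -- star K = -K
  have hstarK : star K = -K := by
    have h1 : star K = (1 + b) * Ring.inverse (1 - b) := by
      show star (Ring.inverse (1 - a) * (1 + a)) = _
      rw [star_mul, ← Ring.inverse_star]
      simp [hstar_a]
    rw [h1]
    -- show (1+b) * (1-b)⁻¹ = -(1-a)⁻¹ * (1+a)
    have key : (1 - a) * ((1 + b) * Ring.inverse (1 - b)) * (1 - b) =
        (1 - a) * (-(Ring.inverse (1 - a) * (1 + a))) * (1 - b) := by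
      have lhs : (1 - a) * ((1 + b) * Ring.inverse (1 - b)) * (1 - b) =
          (1 - a) * (1 + b) * (Ring.inverse (1 - b) * (1 - b)) := by noncomm_ring
      have rhs : (1 - a) * (-(Ring.inverse (1 - a) * (1 + a))) * (1 - b) =
          -(((1 - a) * Ring.inverse (1 - a)) * ((1 + a) * (1 - b))) := by noncomm_ring
      rw [lhs, rhs, Ring.inverse_mul_cancel _ hbinv, Ring.mul_inverse_cancel _ hinv]
      have e1 : (1 - a) * (1 + b) * 1 = 1 + b - a - a * b := by noncomm_ring
      have e2 : -(1 * ((1 + a) * (1 - b))) = -(1 - b + a - a * b) := by noncomm_ring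
      rw [e1, e2, hab]; abel
    have hcl : (1 : Module.End ℝ V) + b =
        -(Ring.inverse (1 - a) * (1 + a)) * (1 - b) := by
      have := hinv.mul_left_cancel (by
        have k2 := congrArg (fun z => z) key
        calc (1 - a) * ((1 + b) * Ring.inverse (1 - b) * (1 - b))
            = (1 - a) * ((1 + b) * Ring.inverse (1 - b)) * (1 - b) := by noncomm_ring
          _ = (1 - a) * (-(Ring.inverse (1 - a) * (1 + a))) * (1 - b) := key
          _ = (1 - a) * (-(Ring.inverse (1 - a) * (1 + a)) * (1 - b)) := by noncomm_ring)
      calc (1 : Module.End ℝ V) + b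
          = (1 + b) * (Ring.inverse (1 - b) * (1 - b)) := by
            rw [Ring.inverse_mul_cancel _ hbinv, mul_one]
        _ = (1 + b) * Ring.inverse (1 - b) * (1 - b) := by noncomm_ring
        _ = -(Ring.inverse (1 - a) * (1 + a)) * (1 - b) := this
    have : (1 + b) * Ring.inverse (1 - b) =
        -(Ring.inverse (1 - a) * (1 + a)) * ((1 - b) * Ring.inverse (1 - b)) := by
      rw [hcl]; noncomm_ring
    rw [this, Ring.mul_inverse_cancel _ hbinv, mul_one]
  -- conclude
  intro X Y
  have := LinearMap.adjoint_inner_right K X Y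
  rw [← LinearMap.star_eq_adjoint, hstarK] at this
  simp only [LinearMap.neg_apply, inner_neg_right] at this
  linarith [this]
end
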